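/- arXiv:2601.15499 — 8 statements merged into one kernel-verified Lean document; each statement's English description precedes it below -/
import Mathlib

section
/- Let p ≥ 1 and Y ⊆ ℝ^p. The set of points of conv(Y) that are nondominated in conv(Y) equals the set of points of Y↑ = conv(Y) + ℝ≥0^p that are nondominated in Y↑. -/
open Set Pointwise

/-- The set of points of `A` that are nondominated in `A` (componentwise order). -/
def nonDomPts (p : ℕ) (A : Set (Fin p → ℝ)) : Set (Fin p → ℝ) :=
  {y | y ∈ A ∧ ∀ y' ∈ A, y' ≤ y → y' = y}

/-- The upper image `Y↑ = conv Y + ℝ≥0^p`. -/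
def upImage (p : ℕ) (Y : Set (Fin p → ℝ)) : Set (Fin p → ℝ) :=
  convexHull ℝ Y + {r : Fin p → ℝ | 0 ≤ r}

theorem stmt_1 (p : ℕ) (hp : 1 ≤ p) (Y : Set (Fin p → ℝ)) :
    nonDomPts p (convexHull ℝ Y) = nonDomPts p (upImage p Y) := by
  have hsub : convexHull ℝ Y ⊆ upImage p Y := by
    intro c hc
    exact ⟨c, hc, 0, Set.mem_setOf_eq ▸ le_refl (0 : Fin p → ℝ), add_zero c⟩
  ext y
  constructor
  · rintro ⟨hy, hmin⟩
    refine ⟨hsub hy, ?_⟩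
    rintro y' ⟨c, hc, r, hr, rfl⟩ hle
    have hcle : c ≤ c + r := le_add_of_nonneg_right hr
    have : c = y := hmin c hc (le_trans hcle hle)
    exact le_antisymm hle (this ▸ hcle)
  · rintro ⟨hy, hmin⟩
    obtain ⟨c, hc, r, hr, rfl⟩ := hy
    have hcle : c ≤ c + r := le_add_of_nonneg_right hr
    have hceq : c = c + r := hmin c (hsub hc) hcle
    refine ⟨by simpa [← hceq] using hc, ?_⟩
    intro y' hy' hle
    exact hmin y' (hsub hy') hle
end

section
/- Let p ≥ 1, Y ⊆ ℝ^p, σ a permutation of {1,…,p}, and y ∈ Y such that for every y' ∈ Y the permuted vector (y_{σ(1)},…,y_{σ(p)}) is lexicographically less than or equal to (y'_{σ(1)},…,y'_{σ(p)}). Then y ∈ Y_ESN, i.e., y is nondominated in Y and y is an extreme point of conv(Y). -/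
open Set Pointwise

/-- Extreme-supported nondominated points of `Y`. -/
def ESN (p : ℕ) (Y : Set (Fin p → ℝ)) : Set (Fin p → ℝ) :=
  {y | y ∈ nonDomPts p Y ∧ y ∈ Set.extremePoints ℝ (convexHull ℝ Y)}

/-- The lexicographic order on `ℝ^p`: `u ≤_lex v` iff `u = v` or `u i < v i` at the
smallest index `i` where they differ. -/
def lexLE {p : ℕ} (u v : Fin p → ℝ) : Prop :=
  u = v ∨ ∃ i : Fin p, (∀ j : Fin p, j < i → u j = v j) ∧ u i < v i

/-!
Reorder coordinates by `σ` and compare lexicographically: this is a linear isomorphism onto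
`Lex (Fin p → ℝ)`, a linearly ordered vector space, and `y` is mapped to the least element of the
image of `Y`. In a linearly ordered vector space an open segment between two points lies strictly
between them, so a least element of a set lies in no open segment of its convex hull (which stays
above it), i.e. it is an extreme point. Nondominance holds because the lexicographic order extends
the componentwise one.
-/

open Function

instance Pi.Lex.posSMulStrictMono {ι 𝕜 β : Type*} [LinearOrder ι] [Zero 𝕜] [Preorder 𝕜]
    [PartialOrder β] [SMul 𝕜 β] [PosSMulStrictMono 𝕜 β] : PosSMulStrictMono 𝕜 (Lex (ι → β)) :=
  ⟨fun _ ha _ _ ⟨i, hi, hlt⟩ =>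
    ⟨i, fun j hj => congrArg _ (hi j hj), smul_lt_smul_of_pos_left hlt ha⟩⟩

lemma lexLE_iff_toLex_le {p : ℕ} {u v : Fin p → ℝ} : lexLE u v ↔ toLex u ≤ toLex v := by
  rw [le_iff_eq_or_lt, toLex_inj]
  rfl

section LinearOrderedModule

variable {𝕜 E F : Type*} [Ring 𝕜] [PartialOrder 𝕜]
  [AddCommGroup F] [LinearOrder F] [IsOrderedAddMonoid F] [Module 𝕜 F] [PosSMulStrictMono 𝕜 F]

lemma eq_of_le_of_le_of_mem_openSegment {a b m : F} (ha : m ≤ a) (hb : m ≤ b)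
    (hm : m ∈ openSegment 𝕜 a b) : a = m := by
  rcases lt_trichotomy a b with hab | rfl | hab
  · exact absurd ha (openSegment_subset_Ioo hab hm).1.not_ge
  · obtain ⟨s, t, -, -, hst, rfl⟩ := hm
    exact (Convex.combo_self hst a).symm
  · rw [openSegment_symm] at hm
    exact absurd hb (openSegment_subset_Ioo hab hm).1.not_ge

lemma mem_extremePoints_convexHull_of_forall_le [IsOrderedRing 𝕜] [AddCommGroup E] [Module 𝕜 E]
    (f : E →ₗ[𝕜] F) (hf : Injective f) {Y : Set E} {y : E} (hy : y ∈ Y)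
    (hmin : ∀ y' ∈ Y, f y ≤ f y') :
    y ∈ (convexHull 𝕜 Y).extremePoints 𝕜 := by
  have hhull : convexHull 𝕜 Y ⊆ f ⁻¹' Ici (f y) :=
    convexHull_min hmin ((convex_Ici _).linear_preimage f)
  refine ⟨subset_convexHull 𝕜 Y hy, fun x hx z hz hseg => ?_⟩
  have hfseg : f y ∈ openSegment 𝕜 (f x) (f z) := by
    rw [← f.coe_toAffineMap, ← image_openSegment]
    exact mem_image_of_mem _ hseg
  exact hf (eq_of_le_of_le_of_mem_openSegment (hhull hx) (hhull hz) hfseg)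

end LinearOrderedModule

theorem stmt_2_general (p : ℕ) (Y : Set (Fin p → ℝ)) (σ : Equiv.Perm (Fin p))
    (y : Fin p → ℝ) (hy : y ∈ Y)
    (hlex : ∀ y' ∈ Y, lexLE (fun i => y (σ i)) (fun i => y' (σ i))) :
    y ∈ ESN p Y := by
  let f : (Fin p → ℝ) ≃ₗ[ℝ] Lex (Fin p → ℝ) :=
    (LinearEquiv.funCongrLeft ℝ ℝ σ).trans (toLexLinearEquiv ℝ _)
  have hmin : ∀ y' ∈ Y, f y ≤ f y' := fun y' hy' => lexLE_iff_toLex_le.1 (hlex y' hy')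
  refine ⟨⟨hy, fun y' hy' hle => f.injective ?_⟩,
    mem_extremePoints_convexHull_of_forall_le f.toLinearMap f.injective hy hmin⟩
  exact (Pi.toLex_monotone fun i => hle (σ i)).antisymm (hmin y' hy')

theorem stmt_2 (p : ℕ) (hp : 1 ≤ p) (Y : Set (Fin p → ℝ)) (σ : Equiv.Perm (Fin p))
    (y : Fin p → ℝ) (hy : y ∈ Y)
    (hlex : ∀ y' ∈ Y, lexLE (fun i => y (σ i)) (fun i => y' (σ i))) :
    y ∈ ESN p Y :=
  stmt_2_general p Y σ y hy hlex
end

section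
/- Let p ≥ 1 and Y ⊆ ℝ^p satisfy Assumption A (Y is nonempty, bounded below, and Y↑ is closed). Then Y↑ = conv(Y_ESN) + ℝ≥0^p. -/
open Set Pointwise

/-!
`Y↑` is closed, convex and bounded below, so by a Minkowski–Klee type theorem it is the convex hull
of its extreme points plus the orthant. An extreme point `e = c + r` of `Y↑` (`c ∈ conv Y`,
`r ≥ 0`) is the midpoint of `c` and `c + 2r`, so `r = 0`; hence `e` is extreme in `conv Y`, lies in
`Y`, and no other point of `Y` lies below it.

The Minkowski–Klee theorem goes by induction on the dimension of `C`. On each side of `x ∈ C`, a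
line through `x` in a direction of the affine hull of `C` either leaves `C` at an exit point or
stays in `C`; in the latter case its direction is `≥ 0` because `C` is bounded below, so this
happens on at most one side. Thus `x` is a convex combination of two exit points, or an exit point
plus a nonnegative vector. An exit point is not in the relative interior of `C`, so a supporting
functional exposes a face of lower dimension through it, and the extreme points of that face are
extreme in `C`.
-/

section Line

variable {E : Type*} [AddCommGroup E] [Module ℝ E]

def IsExitPoint (C : Set E) (a u : E) : Prop :=
  a ∈ C ∧ ∀ t : ℝ, 0 < t → a + t • u ∉ C

theorem Convex.setOf_add_smul_mem {S : Set E} (hS : Convex ℝ S) (x v : E) :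
    Convex ℝ {t : ℝ | x + t • v ∈ S} := by
  have hline : {t : ℝ | x + t • v ∈ S} = AffineMap.lineMap x (x + v) ⁻¹' S := by
    ext t
    simp [AffineMap.lineMap_apply_module', add_comm]
  exact hline ▸ hS.affine_preimage _

end Line

section Support

variable {E : Type*} [NormedAddCommGroup E] [NormedSpace ℝ E]

theorem Convex.exists_dual_le_and_lt_of_notMem_interior {D : Set E} {a : E} (hD : Convex ℝ D)
    (hint : (interior D).Nonempty) (ha : a ∉ interior D) :
    ∃ f : StrongDual ℝ E, (∀ z ∈ D, f z ≤ f a) ∧ ∃ w ∈ D, f w < f a := by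
  obtain ⟨f, hf⟩ := geometric_hahn_banach_open_point hD.interior isOpen_interior ha
  obtain ⟨w, hw⟩ := hint
  have hD_sub : D ⊆ closure (interior D) := by
    rw [hD.closure_interior_eq_closure_of_nonempty_interior ⟨w, hw⟩]
    exact subset_closure
  refine ⟨f, fun z hz => ?_, w, interior_subset hw, hf w hw⟩
  exact closure_minimal (fun y hy => (hf y hy).le) (isClosed_le f.continuous continuous_const)
    (hD_sub hz)

variable [FiniteDimensional ℝ E]

theorem IsExitPoint.exists_dual {C : Set E} {a u : E} (hC : Convex ℝ C) (ha : IsExitPoint C a u)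
    (hu : u ∈ vectorSpan ℝ C) :
    ∃ g : StrongDual ℝ E, (∀ z ∈ C, g z ≤ g a) ∧ ∃ w ∈ C, g w < g a := by
  set V := vectorSpan ℝ C
  have hsub : ∀ z ∈ C, z - a ∈ V := fun z hz => by
    simpa using vsub_mem_vectorSpan ℝ hz ha.1
  -- `C₀` is `C - a`, seen inside its own linear span `V`, where it has nonempty interior.
  set C₀ : Set V := V.subtype ⁻¹' ((-a) +ᵥ C)
  have hmem₀ : ∀ v : V, v ∈ C₀ ↔ a + (v : E) ∈ C := fun v => by
    simp [C₀, mem_vadd_set_iff_neg_vadd_mem]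
  have hC₀ : Convex ℝ C₀ := (hC.vadd (-a)).linear_preimage V.subtype
  have hint : (interior C₀).Nonempty := by
    rw [hC₀.interior_nonempty_iff_affineSpan_eq_top,
      AffineSubspace.affineSpan_eq_top_iff_vectorSpan_eq_top_of_nonempty ℝ V V
        ⟨0, (hmem₀ 0).2 (by simpa using ha.1)⟩]
    apply Submodule.map_injective_of_injective V.injective_subtype
    have himage : V.subtype '' C₀ = (-a) +ᵥ C := by
      refine image_preimage_eq_of_subset fun z hz => ?_
      obtain ⟨c, hc, rfl⟩ := hz
      exact ⟨⟨-a + c, by rw [neg_add_eq_sub]; exact hsub c hc⟩, rfl⟩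
    calc (vectorSpan ℝ C₀).map V.subtype = vectorSpan ℝ (V.subtype '' C₀) :=
          V.subtype.toAffineMap.map_vectorSpan
      _ = (⊤ : Submodule ℝ V).map V.subtype := by
          rw [himage, vectorSpan_vadd, Submodule.map_top, Submodule.range_subtype]
  have h0 : (0 : V) ∉ interior C₀ := by
    intro h
    have hray : Continuous fun t : ℝ => t • (⟨u, hu⟩ : V) := by fun_prop
    obtain ⟨t, ht, htC⟩ :=
      ((hray.tendsto' 0 0 (zero_smul _ _)).eventually (mem_interior_iff_mem_nhds.1 h)).exists_gt
    exact ha.2 t ht (by simpa using (hmem₀ _).1 htC)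
  obtain ⟨f, hf, w, hw, hfw⟩ := hC₀.exists_dual_le_and_lt_of_notMem_interior hint h0
  obtain ⟨g, hg, -⟩ := exists_extension_norm_eq V f
  have hga : ∀ z (hz : z ∈ C), g z = g a + f ⟨z - a, hsub z hz⟩ := fun z hz => by
    rw [← hg, Submodule.coe_mk, map_sub, add_sub_cancel]
  refine ⟨g, fun z hz => ?_, a + w, (hmem₀ w).1 hw, ?_⟩
  · have hfz := hf ⟨z - a, hsub z hz⟩ ((hmem₀ _).2 (by simpa using hz))
    rw [map_zero] at hfz
    linarith [hga z hz]
  · rw [map_zero] at hfw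
    rw [map_add, hg]
    linarith

theorem finrank_vectorSpan_toExposed_lt {C : Set E} {g : StrongDual ℝ E} {a w : E}
    (ha : a ∈ g.toExposed C) (hw : w ∈ C) (hgw : g w < g a) :
    Module.finrank ℝ (vectorSpan ℝ (g.toExposed C)) < Module.finrank ℝ (vectorSpan ℝ C) := by
  refine Submodule.finrank_lt_finrank_of_lt
    (lt_of_le_of_ne (vectorSpan_mono ℝ fun z hz => hz.1) fun heq => hgw.ne ?_)
  have hker : vectorSpan ℝ (g.toExposed C) ≤ LinearMap.ker (g : E →ₗ[ℝ] ℝ) := by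
    refine Submodule.span_le.2 ?_
    rintro _ ⟨z₁, hz₁, z₂, hz₂, rfl⟩
    have hg : ∀ z ∈ g.toExposed C, g z = g a := fun z hz =>
      le_antisymm (ha.2 z hz.1) (hz.2 a ha.1)
    simp [vsub_eq_sub, hg z₁ hz₁, hg z₂ hz₂]
  have hwa : w - a ∈ vectorSpan ℝ C := by simpa using vsub_mem_vectorSpan ℝ hw ha.1
  have := hker (heq ▸ hwa)
  simpa [sub_eq_zero] using this

end Support

section Klee

variable {ι : Type*} {C : Set (ι → ℝ)}

theorem nonneg_of_forall_add_smul_mem (hC : BddBelow C) {x v : ι → ℝ}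
    (hray : ∀ t : ℝ, 0 ≤ t → x + t • v ∈ C) : 0 ≤ v := by
  obtain ⟨b, hb⟩ := hC
  intro i
  by_contra! hvi
  replace hvi : v i < 0 := hvi
  have hx : b i ≤ x i := hb (by simpa using hray 0 le_rfl) i
  set t := (x i - b i + 1) / -v i
  have hbound : b i ≤ x i + t * v i := hb (hray t (div_nonneg (by linarith) (by linarith))) i
  have ht : t * v i = -(x i - b i + 1) := by
    rw [div_mul_eq_mul_div, div_eq_iff (by linarith)]; ring
  linarith

theorem IsClosed.exists_isExitPoint_or_nonneg (hCc : IsClosed C) (hCv : Convex ℝ C)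
    (hCb : BddBelow C) {x : ι → ℝ} (hx : x ∈ C) (v : ι → ℝ) :
    (∃ t : ℝ, 0 ≤ t ∧ IsExitPoint C (x + t • v) v) ∨ 0 ≤ v := by
  set T := {t : ℝ | x + t • v ∈ C}
  have h0 : (0 : ℝ) ∈ T := by simpa [T] using hx
  by_cases hT : BddAbove T
  · have hTc : IsClosed T := hCc.preimage (by fun_prop)
    refine Or.inl ⟨sSup T, le_csSup hT h0, hTc.csSup_mem ⟨0, h0⟩ hT, fun s hs hmem => ?_⟩
    have : sSup T + s ∈ T := by simpa [T, add_smul, add_assoc] using hmem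
    linarith [le_csSup hT this]
  · refine Or.inr (nonneg_of_forall_add_smul_mem hCb (x := x) fun t ht => ?_)
    obtain ⟨s, hs, hts⟩ := not_bddAbove_iff.1 hT t
    exact (hCv.setOf_add_smul_mem x v).ordConnected.out h0 hs ⟨ht, hts.le⟩

theorem IsClosed.mem_of_forall_isExitPoint_mem {S : Set (ι → ℝ)} (hCc : IsClosed C)
    (hCv : Convex ℝ C) (hCb : BddBelow C) (hS : Convex ℝ S)
    (hS_add : ∀ s ∈ S, ∀ r : ι → ℝ, 0 ≤ r → s + r ∈ S) (hext : C.extremePoints ℝ ⊆ S)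
    (hexit : ∀ a u, IsExitPoint C a u → u ∈ vectorSpan ℝ C → a ∈ S) {x : ι → ℝ}
    (hx : x ∈ C) : x ∈ S := by
  by_cases hsingle : ∀ y ∈ C, y = x
  · exact hext ⟨hx, fun y hy _ _ _ => hsingle y hy⟩
  obtain ⟨y, hy, hyx⟩ : ∃ y ∈ C, y ≠ x := by simpa using hsingle
  set v := y - x
  have hv : v ∈ vectorSpan ℝ C := by simpa using vsub_mem_vectorSpan ℝ hy hx
  rcases hCc.exists_isExitPoint_or_nonneg hCv hCb hx v with ⟨t₁, ht₁, h₁⟩ | hv₁ <;>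
    rcases hCc.exists_isExitPoint_or_nonneg hCv hCb hx (-v) with ⟨t₂, ht₂, h₂⟩ | hv₂
  · have hmem₁ : t₁ ∈ {t : ℝ | x + t • v ∈ S} := hexit _ _ h₁ hv
    have hmem₂ : -t₂ ∈ {t : ℝ | x + t • v ∈ S} := by
      simpa using hexit _ _ h₂ (neg_mem hv)
    simpa using (hS.setOf_add_smul_mem x v).ordConnected.out hmem₂ hmem₁
      ⟨by linarith, ht₁⟩
  · simpa using hS_add (x + t₁ • v) (hexit _ _ h₁ hv) _ (smul_nonneg ht₁ hv₂)
  · simpa using hS_add (x + t₂ • -v) (hexit _ _ h₂ (neg_mem hv)) _ (smul_nonneg ht₂ hv₁)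
  · exact absurd (le_antisymm (neg_nonneg.1 hv₂) hv₁) (sub_ne_zero.2 hyx)

theorem IsClosed.subset_convexHull_extremePoints_add_nonneg [Fintype ι] (hCc : IsClosed C)
    (hCv : Convex ℝ C) (hCb : BddBelow C) :
    C ⊆ convexHull ℝ (C.extremePoints ℝ) + {r | 0 ≤ r} := by
  induction hn : Module.finrank ℝ (vectorSpan ℝ C) using Nat.strong_induction_on generalizing C
    with | _ n ih =>
  intro x hx
  refine hCc.mem_of_forall_isExitPoint_mem hCv hCb
    ((convex_convexHull ℝ _).add (convex_Ici 0)) (fun s hs r hr => ?_)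
    (fun e he => ⟨e, subset_convexHull ℝ _ he, 0, self_mem_Ici, add_zero e⟩)
    (fun a u ha hu => ?_) hx
  · obtain ⟨c, hc, r', hr', rfl⟩ := hs
    exact ⟨c, hc, r' + r, add_nonneg hr' hr, (add_assoc _ _ _).symm⟩
  · obtain ⟨g, hga, w, hw, hgw⟩ := ha.exists_dual hCv hu
    have hF : IsExposed ℝ C (g.toExposed C) := ContinuousLinearMap.toExposed.isExposed
    have haF : a ∈ g.toExposed C := ⟨ha.1, hga⟩
    exact add_subset_add_right
      (convexHull_mono hF.isExtreme.extremePoints_subset_extremePoints)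
      (ih _ (hn ▸ finrank_vectorSpan_toExposed_lt haF hw hgw) (hF.isClosed hCc) (hF.convex hCv)
        (hCb.mono hF.subset) rfl haF)

theorem eq_of_le_of_mem_extremePoints_add_nonneg {A : Set (ι → ℝ)} {c x : ι → ℝ}
    (hx : x ∈ (A + {r | 0 ≤ r}).extremePoints ℝ) (hc : c ∈ A) (hcx : c ≤ x) : c = x := by
  have hc' : c ∈ A + {r | 0 ≤ r} := subset_add_left A (le_refl (0 : ι → ℝ)) hc
  have hc'' : c + (2 : ℝ) • (x - c) ∈ A + {r | 0 ≤ r} :=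
    ⟨c, hc, _, smul_nonneg zero_le_two (sub_nonneg.2 hcx), rfl⟩
  refine hx.2 hc' hc'' ⟨1 / 2, 1 / 2, by norm_num, by norm_num, by norm_num, ?_⟩
  module

end Klee

section UpperImage

variable {p : ℕ} {Y : Set (Fin p → ℝ)}

theorem extremePoints_upImage_subset_ESN : (upImage p Y).extremePoints ℝ ⊆ ESN p Y := by
  intro e he
  obtain ⟨c, hc, r, hr, hcr⟩ := he.1
  obtain rfl : c = e :=
    eq_of_le_of_mem_extremePoints_add_nonneg he hc (hcr ▸ le_add_of_nonneg_right hr)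
  have hext : c ∈ (convexHull ℝ Y).extremePoints ℝ :=
    inter_extremePoints_subset_extremePoints_of_subset
      (subset_add_left _ (le_refl (0 : Fin p → ℝ))) ⟨hc, he⟩
  exact ⟨⟨extremePoints_convexHull_subset hext, fun y hy hyc =>
    eq_of_le_of_mem_extremePoints_add_nonneg he (subset_convexHull ℝ Y hy) hyc⟩, hext⟩

theorem bddBelow_upImage {b : Fin p → ℝ} (hb : ∀ y ∈ Y, b ≤ y) : BddBelow (upImage p Y) := by
  refine ⟨b, ?_⟩
  rintro _ ⟨c, hc, r, hr, rfl⟩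
  exact le_add_of_le_of_nonneg (convexHull_min hb (convex_Ici b) hc) hr

end UpperImage

theorem stmt_3_general (p : ℕ) (Y : Set (Fin p → ℝ)) (b : Fin p → ℝ) (hb : ∀ y ∈ Y, b ≤ y)
    (hclosed : IsClosed (upImage p Y)) :
    upImage p Y = convexHull ℝ (ESN p Y) + {r : Fin p → ℝ | 0 ≤ r} := by
  refine Subset.antisymm (fun x hx => ?_)
    (add_subset_add_right (convexHull_mono fun y hy => hy.1.1))
  have hconvex : Convex ℝ (upImage p Y) := (convex_convexHull ℝ Y).add (convex_Ici 0)
  exact add_subset_add_right (convexHull_mono extremePoints_upImage_subset_ESN)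
    (hclosed.subset_convexHull_extremePoints_add_nonneg hconvex (bddBelow_upImage hb) hx)

theorem stmt_3 (p : ℕ) (hp : 1 ≤ p) (Y : Set (Fin p → ℝ))
    (hne : Y.Nonempty) (b : Fin p → ℝ) (hb : ∀ y ∈ Y, b ≤ y)
    (hclosed : IsClosed (upImage p Y)) :
    upImage p Y = convexHull ℝ (ESN p Y) + {r : Fin p → ℝ | 0 ≤ r} :=
  stmt_3_general p Y b hb hclosed
end

section
/- Let p ≥ 1, Y ⊆ ℝ^p, and y, y' ∈ Y. Then Λ(y) ∩ Λ(y') is an exposed face of Λ(y), and symmetrically an exposed face of Λ(y'). -/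
open Set Pointwise Finset

/-- The weight set component `Λ(y)` of a point `y`. -/
def wsc (p : ℕ) (Y : Set (Fin p → ℝ)) (y : Fin p → ℝ) : Set (Fin p → ℝ) :=
  {l ∈ stdSimplex ℝ (Fin p) | ∀ y' ∈ Y, ∑ i, l i * y i ≤ ∑ i, l i * y' i}

lemma wsc_inter_exposed (p : ℕ) (Y : Set (Fin p → ℝ))
    (y y' : Fin p → ℝ) (hy : y ∈ Y) (hy' : y' ∈ Y) :
    IsExposed ℝ (wsc p Y y) (wsc p Y y ∩ wsc p Y y') := by
  rintro ⟨l0, hl0⟩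
  refine ⟨∑ i, (y i - y' i) • ContinuousLinearMap.proj i, ?_⟩
  have Fval : ∀ x : Fin p → ℝ,
      (∑ i, (y i - y' i) • ContinuousLinearMap.proj (R := ℝ) (φ := fun _ : Fin p => ℝ) i) x
        = ∑ i, x i * y i - ∑ i, x i * y' i := by
    intro x
    simp only [ContinuousLinearMap.sum_apply, ContinuousLinearMap.smul_apply,
      ContinuousLinearMap.proj_apply, smul_eq_mul]
    rw [← Finset.sum_sub_distrib]
    exact Finset.sum_congr rfl fun i _ => by ring
  have Fle : ∀ x ∈ wsc p Y y,
      (∑ i, (y i - y' i) • ContinuousLinearMap.proj (R := ℝ) (φ := fun _ : Fin p => ℝ) i) x ≤ 0 := by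
    intro x hx
    rw [Fval]
    have := hx.2 y' hy'
    linarith
  have F0 : (∑ i, (y i - y' i) • ContinuousLinearMap.proj (R := ℝ) (φ := fun _ : Fin p => ℝ) i) l0 = 0 := by
    rw [Fval]
    have h1 := hl0.1.2 y' hy'
    have h2 := hl0.2.2 y hy
    linarith
  ext x
  simp only [Set.mem_inter_iff, Set.mem_setOf_eq]
  constructor
  · rintro ⟨hx1, hx2⟩
    refine ⟨hx1, fun z hz => ?_⟩
    have h1 := Fle z hz
    rw [Fval] at h1
    have h2 := hx2.2 y hy
    have h3 := hx1.2 y' hy'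
    simp only [Fval]
    linarith
  · rintro ⟨hx1, hx2⟩
    refine ⟨hx1, hx1.1, fun z hz => ?_⟩
    have h1 := hx2 l0 ⟨hl0.1.1, hl0.1.2⟩
    rw [F0, Fval] at h1
    have h2 := hx1.2 y' hy'
    have h3 : ∑ i, x i * y' i = ∑ i, x i * y i := by linarith
    rw [h3]
    exact hx1.2 z hz

theorem stmt_8 (p : ℕ) (hp : 1 ≤ p) (Y : Set (Fin p → ℝ))
    (y y' : Fin p → ℝ) (hy : y ∈ Y) (hy' : y' ∈ Y) :
    IsExposed ℝ (wsc p Y y) (wsc p Y y ∩ wsc p Y y') ∧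
    IsExposed ℝ (wsc p Y y') (wsc p Y y ∩ wsc p Y y') := by
  refine ⟨wsc_inter_exposed p Y y y' hy hy', ?_⟩
  rw [Set.inter_comm]
  exact wsc_inter_exposed p Y y' y hy' hy
end

section
/- Let p ≥ 1, X a nonempty type, f : X → ℝ^p, and Y := f(X), and suppose Assumption A holds for Y (Y is nonempty, bounded below, and Y↑ is closed). Let S := ⋃_{y ∈ Y_ESN} ext(Λ(y)), the union over all extreme-supported nondominated points y of the set of extreme points of Λ(y). Then X_SE = X_E ∩ ⋃_{λ ∈ S} X_λ, i.e., a solution is supported efficient if and only if it is efficient and optimal for the weighted-sum problem of some weight in S. -/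
open Set Pointwise Finset

/-! If `x` is efficient and optimal for some weight, the compact set `Λ(f x)` has an extreme point
`l`. The `l`-optimal face of `Y↑` is closed and bounded below, hence has an extreme point `y`, which
is then an extreme point of `Y↑` and so lies in `Y_ESN`, with `l ⬝ᵥ y = l ⬝ᵥ f x`. The weights of
`Λ(y)` at which `f x` is as good as `y` form a face of `Λ(y)` inside `Λ(f x)`, so `l` is still
extreme in `Λ(y)`. -/

section MinimizerSets

variable {E : Type*}

lemma isExtreme_setOf_isMinOn [AddCommGroup E] [Module ℝ E] (φ : E →ₗ[ℝ] ℝ) (A : Set E) :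
    IsExtreme ℝ A {x ∈ A | IsMinOn φ A x} := by
  refine ⟨fun x hx => hx.1, fun x₁ hx₁ x₂ hx₂ x ⟨_, hxmin⟩ ⟨a, b, ha, hb, hab, hx⟩ => ?_⟩
  have hφx : φ x = a * φ x₁ + b * φ x₂ := by
    rw [← hx, map_add, map_smul, map_smul, smul_eq_mul, smul_eq_mul]
  have h₁ : φ x ≤ φ x₁ := hxmin hx₁
  have h₂ : φ x ≤ φ x₂ := hxmin hx₂
  have hsum : a * (φ x₁ - φ x) + b * (φ x₂ - φ x) = 0 := by
    linear_combination -hφx - φ x * hab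
  have e₁ : φ x₁ = φ x := by nlinarith [mul_nonneg hb.le (sub_nonneg.2 h₂)]
  exact ⟨hx₁, isMinOn_iff.2 fun y hy => e₁ ▸ hxmin hy⟩

lemma isClosed_setOf_isMinOn [TopologicalSpace E] {β : Type*} [TopologicalSpace β] [LinearOrder β]
    [OrderClosedTopology β] {φ : E → β} (hφ : Continuous φ) {A : Set E} (hA : IsClosed A) :
    IsClosed {x ∈ A | IsMinOn φ A x} := by
  have : {x ∈ A | IsMinOn φ A x} = A ∩ ⋂ a ∈ A, {x | φ x ≤ φ a} := by
    ext x; simp [IsMinOn, IsMinFilter, Filter.eventually_principal]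
  rw [this]
  exact hA.inter (isClosed_biInter fun a _ => isClosed_le hφ continuous_const)

end MinimizerSets

section BoundedBelow

variable {ι : Type*} [Fintype ι]

lemma isCompact_inter_setOf_sum_le {K : Set (ι → ℝ)} (hK : IsClosed K) (hbdd : BddBelow K)
    (s : ℝ) : IsCompact (K ∩ {z | ∑ i, z i ≤ s}) := by
  obtain ⟨b, hb⟩ := hbdd
  refine (isCompact_Icc (a := b) (b := fun i => b i + (s - ∑ j, b j))).of_isClosed_subset
    (hK.inter (isClosed_le (by fun_prop) continuous_const)) ?_
  rintro z ⟨hzK, hzs⟩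
  refine ⟨hb hzK, fun i => ?_⟩
  have hzb : ∀ j, 0 ≤ z j - b j := fun j => sub_nonneg.2 (hb hzK j)
  have : z i - b i ≤ ∑ j, (z j - b j) :=
    Finset.single_le_sum (fun j _ => hzb j) (Finset.mem_univ i)
  rw [Finset.sum_sub_distrib] at this
  have hzs : ∑ i, z i ≤ s := hzs
  linarith

/-- The minimizers of the coordinate sum on `K` form a nonempty compact extreme subset. -/
lemma extremePoints_nonempty_of_isClosed_of_bddBelow {K : Set (ι → ℝ)} (hK : IsClosed K)
    (hne : K.Nonempty) (hbdd : BddBelow K) : (K.extremePoints ℝ).Nonempty := by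
  obtain ⟨z₀, hz₀⟩ := hne
  let σ : (ι → ℝ) →ₗ[ℝ] ℝ := ∑ i, LinearMap.proj i
  have hσ : ∀ z, σ z = ∑ i, z i := fun z => by simp [σ]
  have hK' : IsCompact (K ∩ {z | σ z ≤ σ z₀}) := by
    simpa only [hσ] using isCompact_inter_setOf_sum_le hK hbdd (σ z₀)
  obtain ⟨zm, ⟨hzmK, hzm₀⟩, hzm⟩ :=
    hK'.exists_isMinOn ⟨z₀, hz₀, show σ z₀ ≤ σ z₀ from le_rfl⟩
      σ.continuous_of_finiteDimensional.continuousOn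
  have hzmM : zm ∈ {z ∈ K | IsMinOn σ K z} := by
    refine ⟨hzmK, fun z hz => ?_⟩
    by_cases h : σ z ≤ σ z₀
    · exact hzm ⟨hz, h⟩
    · exact (le_trans hzm₀ (not_le.1 h).le : σ zm ≤ σ z)
  have hM : IsCompact {z ∈ K | IsMinOn σ K z} :=
    hK'.of_isClosed_subset (isClosed_setOf_isMinOn σ.continuous_of_finiteDimensional hK)
      fun z hz => ⟨hz.1, show σ z ≤ σ z₀ from le_trans (hz.2 hzmM.1) hzm₀⟩
  obtain ⟨y, hy⟩ := hM.extremePoints_nonempty ⟨zm, hzmM⟩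
  exact ⟨y, (isExtreme_setOf_isMinOn σ K).extremePoints_subset_extremePoints hy⟩

end BoundedBelow

lemma eq_of_le_of_mem_extremePoints {E : Type*} [AddCommGroup E] [PartialOrder E]
    [IsOrderedAddMonoid E] [Module ℝ E] {A : Set E} (hA : ∀ z ∈ A, ∀ r, 0 ≤ r → z + r ∈ A)
    {y z : E} (hy : y ∈ A.extremePoints ℝ) (hz : z ∈ A) (hzy : z ≤ y) : z = y :=
  hy.2 hz (hA y hy.1 (y - z) (sub_nonneg.2 hzy))
    ⟨1 / 2, 1 / 2, by norm_num, by norm_num, by norm_num, by module⟩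

section UpperImage

variable {p : ℕ} {Y : Set (Fin p → ℝ)}

lemma add_mem_upImage {z r : Fin p → ℝ} (hz : z ∈ upImage p Y) (hr : 0 ≤ r) :
    z + r ∈ upImage p Y := by
  obtain ⟨c, hc, s, hs, rfl⟩ := hz
  exact ⟨c, hc, s + r, add_nonneg hs hr, (add_assoc c s r).symm⟩

lemma convexHull_subset_upImage : convexHull ℝ Y ⊆ upImage p Y :=
  fun c hc => ⟨c, hc, 0, show (0 : Fin p → ℝ) ≤ 0 from le_rfl, add_zero c⟩

lemma subset_upImage : Y ⊆ upImage p Y :=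
  (subset_convexHull ℝ Y).trans convexHull_subset_upImage

lemma bddBelow_upImage_s9 (hY : BddBelow Y) : BddBelow (upImage p Y) := by
  obtain ⟨b, hb⟩ := hY
  refine ⟨b, ?_⟩
  rintro _ ⟨c, hc, r, hr, rfl⟩
  exact le_add_of_le_of_nonneg (convexHull_min hb (convex_Ici b) hc) hr

lemma isMinOn_upImage {l y₀ : Fin p → ℝ} (hl : 0 ≤ l) (hy₀ : IsMinOn (l ⬝ᵥ ·) Y y₀) :
    IsMinOn (l ⬝ᵥ ·) (upImage p Y) y₀ := by
  rintro _ ⟨c, hc, r, hr, rfl⟩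
  have hc : l ⬝ᵥ y₀ ≤ l ⬝ᵥ c :=
    convexHull_min hy₀ ((convex_Ici _).linear_preimage (dotProductBilin ℝ ℝ l)) hc
  show l ⬝ᵥ y₀ ≤ l ⬝ᵥ (c + r)
  rw [dotProduct_add]
  exact le_add_of_le_of_nonneg hc (dotProduct_nonneg_of_nonneg hl hr)

lemma mem_ESN_of_mem_extremePoints_upImage {y : Fin p → ℝ}
    (hy : y ∈ (upImage p Y).extremePoints ℝ) : y ∈ ESN p Y := by
  have hup : ∀ z ∈ upImage p Y, ∀ r, 0 ≤ r → z + r ∈ upImage p Y :=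
    fun _ hz _ hr => add_mem_upImage hz hr
  obtain ⟨c, hc, r, hr, hcr⟩ := hy.1
  have hcy : c = y := eq_of_le_of_mem_extremePoints hup hy (convexHull_subset_upImage hc)
    (hcr ▸ le_add_of_nonneg_right hr)
  have hyhull : y ∈ (convexHull ℝ Y).extremePoints ℝ :=
    inter_extremePoints_subset_extremePoints_of_subset convexHull_subset_upImage ⟨hcy ▸ hc, hy⟩
  exact ⟨⟨extremePoints_convexHull_subset hyhull, fun y' hy' hle =>
    eq_of_le_of_mem_extremePoints hup hy (subset_upImage hy') hle⟩, hyhull⟩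

end UpperImage

section WeightSet

variable {p : ℕ} {Y : Set (Fin p → ℝ)}

lemma isCompact_wsc (y : Fin p → ℝ) : IsCompact (wsc p Y y) := by
  have hclosed : IsClosed (wsc p Y y) := by
    have : wsc p Y y = stdSimplex ℝ (Fin p) ∩ ⋂ y' ∈ Y, {l | l ⬝ᵥ y ≤ l ⬝ᵥ y'} := by
      ext l; simp [wsc, dotProduct]
    rw [this]
    exact (isClosed_stdSimplex ℝ (Fin p)).inter <| isClosed_biInter fun y' _ =>
      isClosed_le (continuous_id.dotProduct continuous_const)
        (continuous_id.dotProduct continuous_const)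
  exact (isCompact_stdSimplex ℝ (Fin p)).of_isClosed_subset hclosed fun l hl => hl.1

lemma mem_extremePoints_wsc_of_dotProduct_eq {y z l : Fin p → ℝ} (hz : z ∈ Y)
    (hl : l ∈ (wsc p Y z).extremePoints ℝ) (hyz : l ⬝ᵥ y = l ⬝ᵥ z) :
    l ∈ (wsc p Y y).extremePoints ℝ := by
  let φ : (Fin p → ℝ) →ₗ[ℝ] ℝ := (dotProductBilin ℝ ℝ).flip (z - y)
  have hφ : ∀ l', φ l' = l' ⬝ᵥ z - l' ⬝ᵥ y := fun l' => by simp [φ]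
  have hlz := extremePoints_subset hl
  have hlM : l ∈ {l' ∈ wsc p Y y | IsMinOn φ (wsc p Y y) l'} := by
    refine ⟨⟨hlz.1, fun y' hy' => hyz.trans_le (hlz.2 y' hy')⟩, isMinOn_iff.2 fun l' hl' => ?_⟩
    rw [hφ, hφ, hyz, sub_self, sub_nonneg]
    exact hl'.2 z hz
  have hMsub : {l' ∈ wsc p Y y | IsMinOn φ (wsc p Y y) l'} ⊆ wsc p Y z := by
    rintro l' ⟨hl'y, hl'min⟩
    have : φ l' ≤ φ l := hl'min hlM.1
    rw [hφ, hφ, hyz, sub_self, sub_nonpos] at this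
    exact ⟨hl'y.1, fun y' hy' => this.trans (hl'y.2 y' hy')⟩
  exact (isExtreme_setOf_isMinOn φ _).extremePoints_subset_extremePoints
    (inter_extremePoints_subset_extremePoints_of_subset hMsub ⟨hlM, hl⟩)

theorem exists_mem_ESN_mem_extremePoints_wsc (hY : BddBelow Y)
    (hclosed : IsClosed (upImage p Y)) {z l : Fin p → ℝ} (hz : z ∈ Y)
    (hl : l ∈ (wsc p Y z).extremePoints ℝ) : ∃ y ∈ ESN p Y, l ∈ (wsc p Y y).extremePoints ℝ := by
  let φ := dotProductBilin ℝ ℝ l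
  have hlz := extremePoints_subset hl
  have hzF : z ∈ {w ∈ upImage p Y | IsMinOn φ (upImage p Y) w} :=
    ⟨subset_upImage hz, isMinOn_upImage hlz.1.1 (isMinOn_iff.2 hlz.2)⟩
  obtain ⟨y, hy⟩ := extremePoints_nonempty_of_isClosed_of_bddBelow
    (isClosed_setOf_isMinOn φ.continuous_of_finiteDimensional hclosed) ⟨z, hzF⟩
    ((bddBelow_upImage_s9 hY).mono fun w hw => hw.1)
  have hyF := extremePoints_subset hy
  refine ⟨y, mem_ESN_of_mem_extremePoints_upImage
    ((isExtreme_setOf_isMinOn φ _).extremePoints_subset_extremePoints hy),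
    mem_extremePoints_wsc_of_dotProduct_eq hz hl (le_antisymm (hyF.2 hzF.1) (hzF.2 hyF.1))⟩

end WeightSet

theorem stmt_9_general (p : ℕ) (X : Type*) (f : X → Fin p → ℝ)
    (b : Fin p → ℝ) (hb : ∀ y ∈ Set.range f, b ≤ y)
    (hclosed : IsClosed (upImage p (Set.range f))) :
    -- X_SE = X_E ∩ ⋃_{λ ∈ S} X_λ where S = ⋃_{y ∈ Y_ESN} ext Λ(y)
    {x : X | f x ∈ nonDomPts p (Set.range f) ∧
        ∃ l ∈ stdSimplex ℝ (Fin p), ∀ x'' : X, ∑ i, l i * f x i ≤ ∑ i, l i * f x'' i}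
      = {x : X | f x ∈ nonDomPts p (Set.range f)} ∩
        ⋃ l ∈ ⋃ y ∈ ESN p (Set.range f), Set.extremePoints ℝ (wsc p (Set.range f) y),
          {x : X | ∀ x'' : X, ∑ i, l i * f x i ≤ ∑ i, l i * f x'' i} := by
  ext x
  simp only [Set.mem_inter_iff, Set.mem_iUnion, exists_prop]
  constructor
  · rintro ⟨hE, l₀, hl₀, hopt⟩
    have hl₀x : l₀ ∈ wsc p (Set.range f) (f x) := ⟨hl₀, by rintro _ ⟨x', rfl⟩; exact hopt x'⟩
    obtain ⟨l, hl⟩ := (isCompact_wsc (f x)).extremePoints_nonempty ⟨l₀, hl₀x⟩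
    obtain ⟨y, hy, hly⟩ :=
      exists_mem_ESN_mem_extremePoints_wsc ⟨b, hb⟩ hclosed (Set.mem_range_self x) hl
    exact ⟨hE, l, ⟨y, hy, hly⟩, fun x' => (extremePoints_subset hl).2 _ (Set.mem_range_self x')⟩
  · rintro ⟨hE, l, ⟨y, -, hl⟩, hopt⟩
    exact ⟨hE, l, (extremePoints_subset hl).1, hopt⟩

theorem stmt_9 (p : ℕ) (hp : 1 ≤ p) (X : Type*) [Nonempty X] (f : X → Fin p → ℝ)
    (b : Fin p → ℝ) (hb : ∀ y ∈ Set.range f, b ≤ y)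
    (hclosed : IsClosed (upImage p (Set.range f))) :
    -- X_SE = X_E ∩ ⋃_{λ ∈ S} X_λ where S = ⋃_{y ∈ Y_ESN} ext Λ(y)
    {x : X | f x ∈ nonDomPts p (Set.range f) ∧
        ∃ l ∈ stdSimplex ℝ (Fin p), ∀ x'' : X, ∑ i, l i * f x i ≤ ∑ i, l i * f x'' i}
      = {x : X | f x ∈ nonDomPts p (Set.range f)} ∩
        ⋃ l ∈ ⋃ y ∈ ESN p (Set.range f), Set.extremePoints ℝ (wsc p (Set.range f) y),
          {x : X | ∀ x'' : X, ∑ i, l i * f x i ≤ ∑ i, l i * f x'' i} :=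
  stmt_9_general p X f b hb hclosed
end

section
/- Let p ≥ 1, X a type, and f : X → ℝ^p with f_i(x) > 0 for all x ∈ X and all i. Fix x' ∈ X and define λ ∈ ℝ^p by λ_i = 1/f_i(x'). If x ∈ X satisfies λ·f(x) ≤ λ·f(x'') for all x'' ∈ X, then there exists α ∈ ℝ^p such that α_i ≥ 1 for all i, α_j = 1 for at least one j, Σ_{i : α_i > 1} α_i ≤ p, and f_i(x) ≤ α_i · f_i(x') for all i. -/
/-!
Optimality of `x` against `x'` itself says that the ratios `r i = f x i / f x' i` sum to at most
`p`. Hence `α = max r 1` works: some ratio is at most the average `1`, and the `α i > 1` are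
ratios, whose sum is at most `∑ r i ≤ p`.
-/

open Finset

section MaxOne

variable {ι : Type*} [Fintype ι] (r : ι → ℝ)

lemma exists_max_one_eq_one_of_sum_le_card [Nonempty ι] (h : ∑ i, r i ≤ Fintype.card ι) :
    ∃ j, max (r j) 1 = 1 := by
  obtain ⟨j, -, hj⟩ := exists_le_of_sum_le univ_nonempty
    (h.trans_eq (by simp) : ∑ i, r i ≤ ∑ _i : ι, (1 : ℝ))
  exact ⟨j, max_eq_right hj⟩

lemma sum_filter_one_lt_max_one_le_sum (hr : ∀ i, 0 ≤ r i) :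
    ∑ i ∈ univ.filter (fun i => 1 < max (r i) 1), max (r i) 1 ≤ ∑ i, r i := by
  have hfilter : univ.filter (fun i => 1 < max (r i) 1) = univ.filter (fun i => 1 < r i) := by
    simp
  calc ∑ i ∈ univ.filter (fun i => 1 < max (r i) 1), max (r i) 1
      = ∑ i ∈ univ.filter (fun i => 1 < r i), r i := by
        rw [hfilter]
        exact sum_congr rfl fun i hi => max_eq_left (mem_filter.mp hi).2.le
    _ ≤ ∑ i, r i := sum_le_sum_of_subset_of_nonneg (filter_subset _ _) fun i _ _ => hr i

end MaxOne

theorem stmt_14 (p : ℕ) (hp : 1 ≤ p) (X : Type*) (f : X → Fin p → ℝ)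
    (hf : ∀ (x : X) (i : Fin p), 0 < f x i) (x' : X) (x : X)
    (hx : ∀ x'' : X, ∑ i, (1 / f x' i) * f x i ≤ ∑ i, (1 / f x' i) * f x'' i) :
    ∃ α : Fin p → ℝ, (∀ i, 1 ≤ α i) ∧ (∃ j, α j = 1) ∧
      (∑ i ∈ Finset.univ.filter (fun i => 1 < α i), α i) ≤ (p : ℝ) ∧
      ∀ i, f x i ≤ α i * f x' i := by
  set r : Fin p → ℝ := fun i => f x i / f x' i
  have : Nonempty (Fin p) := ⟨⟨0, hp⟩⟩
  have hsum : ∑ i, r i ≤ Fintype.card (Fin p) := by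
    simpa [r, div_eq_inv_mul, inv_mul_cancel₀ (hf x' _).ne'] using hx x'
  refine ⟨fun i => max (r i) 1, fun i => le_max_right _ _,
    exists_max_one_eq_one_of_sum_le_card r hsum, ?_, fun i => ?_⟩
  · have hr : ∀ i, 0 ≤ r i := fun i => (div_pos (hf x i) (hf x' i)).le
    simpa using (sum_filter_one_lt_max_one_le_sum r hr).trans hsum
  · calc f x i = r i * f x' i := (div_mul_cancel₀ _ (hf x' i).ne').symm
      _ ≤ max (r i) 1 * f x' i := mul_le_mul_of_nonneg_right (le_max_left _ _) (hf x' i).le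
end

section
/- Let p ≥ 2, X a type, and f : X → ℝ^p with f_i(x) > 0 for all x ∈ X and all i. Assume that for every λ ∈ Λ with λ_i > 0 for all i, the weighted-sum problem has an optimal solution, i.e., there is x ∈ X with λ·f(x) ≤ λ·f(x'') for all x'' ∈ X. Then X_SE is an A-approximation of all efficient solutions: for every x' ∈ X_E there exist x ∈ X_SE and α ∈ ℝ^p with α_i ≥ 1 for all i, α_j = 1 for at least one j, Σ_{i : α_i > 1} α_i = p, and f_i(x) ≤ α_i · f_i(x') for all i. -/
open Set Finset

theorem stmt_15 (p : ℕ) (hp : 2 ≤ p) (X : Type*) (f : X → Fin p → ℝ)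
    (hf : ∀ (x : X) (i : Fin p), 0 < f x i)
    (hopt : ∀ l ∈ stdSimplex ℝ (Fin p), (∀ i, 0 < l i) →
      ∃ x : X, ∀ x'' : X, ∑ i, l i * f x i ≤ ∑ i, l i * f x'' i)
    (x' : X) (hx' : f x' ∈ nonDomPts p (Set.range f)) :
    ∃ x : X,
      (f x ∈ nonDomPts p (Set.range f) ∧
        ∃ l ∈ stdSimplex ℝ (Fin p), ∀ x'' : X, ∑ i, l i * f x i ≤ ∑ i, l i * f x'' i) ∧
      ∃ α : Fin p → ℝ, (∀ i, 1 ≤ α i) ∧ (∃ j, α j = 1) ∧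
        (∑ i ∈ Finset.univ.filter (fun i => 1 < α i), α i) = (p : ℝ) ∧
        ∀ i, f x i ≤ α i * f x' i := by
  have hp0 : 0 < p := by omega
  haveI : Nonempty (Fin p) := ⟨⟨0, hp0⟩⟩
  set S : ℝ := ∑ j, (f x' j)⁻¹ with hS
  have hSpos : 0 < S := Finset.sum_pos (fun j _ => inv_pos.mpr (hf x' j)) Finset.univ_nonempty
  set l : Fin p → ℝ := fun i => (f x' i)⁻¹ / S with hl
  have hlmem : l ∈ stdSimplex ℝ (Fin p) := by
    constructor
    · intro i; exact (div_pos (inv_pos.mpr (hf x' i)) hSpos).le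
    · rw [← Finset.sum_div, ← hS, div_self hSpos.ne']
  have hlpos : ∀ i, 0 < l i := fun i => div_pos (inv_pos.mpr (hf x' i)) hSpos
  obtain ⟨x, hx⟩ := hopt l hlmem hlpos
  -- x is efficient
  have hxnd : f x ∈ nonDomPts p (Set.range f) := by
    refine ⟨Set.mem_range_self x, ?_⟩
    rintro y ⟨x'', rfl⟩ hle
    funext i
    by_contra hne
    have hlt : f x'' i < f x i := lt_of_le_of_ne (hle i) hne
    have : ∑ j, l j * f x'' j < ∑ j, l j * f x j :=
      Finset.sum_lt_sum (fun j _ => mul_le_mul_of_nonneg_left (hle j) (hlpos j).le)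
        ⟨i, Finset.mem_univ i, by
          exact mul_lt_mul_of_pos_left hlt (hlpos i)⟩
    exact absurd (hx x'') (not_le.mpr this)
  set r : Fin p → ℝ := fun i => f x i / f x' i with hr
  have hrpos : ∀ i, 0 < r i := fun i => div_pos (hf x i) (hf x' i)
  have hrmul : ∀ i, r i * f x' i = f x i := fun i =>
    div_mul_cancel₀ _ (hf x' i).ne'
  -- key inequality
  have hkey : ∑ i, r i ≤ (p : ℝ) := by
    have h := hx x'
    have e1 : ∑ i, l i * f x i = (∑ i, r i) / S := by
      rw [Finset.sum_div]
      refine Finset.sum_congr rfl fun i _ => ?_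
      simp only [hl, hr]
      ring
    have e2 : ∑ i, l i * f x' i = (p : ℝ) / S := by
      have : ∀ i ∈ Finset.univ, l i * f x' i = 1 / S := by
        intro i _
        simp only [hl]
        rw [div_mul_eq_mul_div, inv_mul_cancel₀ (hf x' i).ne']
      rw [Finset.sum_congr rfl this, Finset.sum_const, Finset.card_univ, Fintype.card_fin]
      simp [div_eq_mul_inv]
    rw [e1, e2] at h
    exact (div_le_div_iff_of_pos_right hSpos).mp h
  refine ⟨x, ⟨hxnd, l, hlmem, hx⟩, ?_⟩
  by_cases hT : ∃ t, 1 < r t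
  · obtain ⟨t, ht⟩ := hT
    set T : Finset (Fin p) := Finset.univ.filter (fun i => 1 < r i) with hTdef
    have htT : t ∈ T := by simp [hTdef, ht]
    have hsumT : ∑ i ∈ T, r i ≤ (p : ℝ) :=
      le_trans (Finset.sum_le_sum_of_subset_of_nonneg (Finset.subset_univ T)
        (fun i _ _ => (hrpos i).le)) hkey
    have hsplit : ∑ i ∈ T.erase t, r i + r t = ∑ i ∈ T, r i :=
      Finset.sum_erase_add T r htT
    set α : Fin p → ℝ := fun i =>
      if i = t then (p : ℝ) - ∑ j ∈ T.erase t, r j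
      else if 1 < r i then r i else 1 with hα
    have hαt : α t = (p : ℝ) - ∑ j ∈ T.erase t, r j := by simp [hα]
    have hrα : ∀ i, r i ≤ α i := by
      intro i
      by_cases hit : i = t
      · subst hit; rw [hαt]; linarith
      · simp only [hα, if_neg hit]
        by_cases h1 : 1 < r i
        · simp [h1]
        · simp [h1]; linarith [not_lt.mp h1]
    have hα1 : ∀ i, 1 ≤ α i := by
      intro i
      by_cases hit : i = t
      · rw [hit]; exact le_trans ht.le (hrα t)
      · simp only [hα, if_neg hit]
        by_cases h1 : 1 < r i
        · simp [h1]; linarith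
        · simp [h1]
    -- some coordinate with r ≤ 1 exists
    have hjex : ∃ j, ¬ 1 < r j := by
      by_contra hall
      push_neg at hall
      have : (p : ℝ) < ∑ i, r i := by
        have := Finset.sum_lt_sum_of_nonempty (Finset.univ_nonempty (α := Fin p))
          (f := fun _ => (1 : ℝ)) (g := r) (fun i _ => hall i)
        simpa using this
      linarith
    obtain ⟨j, hj⟩ := hjex
    have hjt : j ≠ t := fun h => hj (h ▸ ht)
    have hαj : α j = 1 := by simp [hα, if_neg hjt, hj]
    have hfilter : Finset.univ.filter (fun i => 1 < α i) = T := by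
      ext i
      simp only [Finset.mem_filter, Finset.mem_univ, true_and, hTdef]
      constructor
      · intro h1
        by_cases hit : i = t
        · subst hit; exact ht
        · simp only [hα, if_neg hit] at h1
          by_cases h2 : 1 < r i
          · exact h2
          · simp [h2] at h1
      · intro h1
        exact lt_of_lt_of_le h1 (hrα i)
    refine ⟨α, hα1, ⟨j, hαj⟩, ?_, ?_⟩
    · rw [hfilter, ← Finset.sum_erase_add T α htT, hαt]
      have : ∑ i ∈ T.erase t, α i = ∑ i ∈ T.erase t, r i := by
        refine Finset.sum_congr rfl fun i hi => ?_
        have hit : i ≠ t := Finset.ne_of_mem_erase hi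
        have hiT : i ∈ T := Finset.mem_of_mem_erase hi
        have h1 : 1 < r i := by simpa [hTdef] using hiT
        simp [hα, if_neg hit, h1]
      rw [this]; ring
    · intro i
      calc f x i = r i * f x' i := (hrmul i).symm
        _ ≤ α i * f x' i := mul_le_mul_of_nonneg_right (hrα i) (hf x' i).le
  · push_neg at hT
    set t0 : Fin p := ⟨0, hp0⟩ with ht0
    set j1 : Fin p := ⟨1, by omega⟩ with hj1
    have hne : j1 ≠ t0 := by simp [ht0, hj1, Fin.ext_iff]
    set α : Fin p → ℝ := fun i => if i = t0 then (p : ℝ) else 1 with hα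
    have hp1 : (1 : ℝ) < (p : ℝ) := by exact_mod_cast by omega
    have hα1 : ∀ i, 1 ≤ α i := by
      intro i; simp only [hα]; split
      · exact hp1.le
      · exact le_refl 1
    refine ⟨α, hα1, ⟨j1, by simp [hα, hne]⟩, ?_, ?_⟩
    · have hfilter : Finset.univ.filter (fun i => 1 < α i) = {t0} := by
        ext i
        simp only [Finset.mem_filter, Finset.mem_univ, true_and, Finset.mem_singleton, hα]
        constructor
        · intro h; by_contra hit; simp [hit] at h
        · intro h; simp [h, hp1]
      rw [hfilter, Finset.sum_singleton]
      simp [hα]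
    · intro i
      have hle : f x i ≤ f x' i := by
        have h1 : f x i / f x' i ≤ 1 := hT i
        exact (div_le_one (hf x' i)).mp h1
      calc f x i ≤ f x' i := hle
        _ = 1 * f x' i := (one_mul _).symm
        _ ≤ α i * f x' i := mul_le_mul_of_nonneg_right (hα1 i) (hf x' i).le
end

section
/- Let p ≥ 1 and Y ⊆ ℝ^p be nonempty and bounded below. Then the recession cone of Y↑ is the nonnegative orthant: {r ∈ ℝ^p : z + t·r ∈ Y↑ for all z ∈ Y↑ and all real t ≥ 0} = {r ∈ ℝ^p : r ≥ 0}. -/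
open Set Pointwise

theorem stmt_18 (p : ℕ) (hp : 1 ≤ p) (Y : Set (Fin p → ℝ))
    (hne : Y.Nonempty) (b : Fin p → ℝ) (hb : ∀ y ∈ Y, b ≤ y) :
    {r : Fin p → ℝ | ∀ z ∈ upImage p Y, ∀ t : ℝ, 0 ≤ t → z + t • r ∈ upImage p Y}
      = {r : Fin p → ℝ | 0 ≤ r} := by
  ext r
  simp only [mem_setOf_eq]
  constructor
  · intro h
    obtain ⟨y, hy⟩ := hne
    have hz : y ∈ upImage p Y := ⟨y, subset_convexHull ℝ Y hy, 0, fun i => le_refl 0, by simp⟩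
    have hbd : ∀ x ∈ upImage p Y, b ≤ x := by
      rintro x ⟨c, hc, s, hs, rfl⟩
      have hc' : c ∈ Ici b := convexHull_min (fun w hw => hb w hw) (convex_Ici b) hc
      calc b ≤ c := hc'
        _ ≤ c + s := le_add_of_nonneg_right hs
    intro i
    by_contra hri
    push_neg at hri
    simp only [Pi.zero_apply] at hri
    have hri0 : r i ≠ 0 := ne_of_lt hri
    set t : ℝ := (b i - y i - 1) / r i with ht
    have hby : b i ≤ y i := hb y hy i
    have htn : 0 ≤ t := div_nonneg_iff.2 (Or.inr ⟨by linarith, hri.le⟩)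
    have hmem := hbd _ (h y hz t htn) i
    have htr : t * r i = b i - y i - 1 := by
      rw [ht, div_mul_cancel₀ _ hri0]
    have : (y + t • r) i = y i + t * r i := rfl
    rw [this, htr] at hmem
    linarith
  · rintro hr z ⟨c, hc, s, hs, rfl⟩ t ht
    exact ⟨c, hc, s + t • r, add_nonneg hs (smul_nonneg ht hr), (add_assoc c s (t • r)).symm⟩
end
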